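/- Let g : 𝒳 → [0,∞) be measurable, let σ_C = inf{k ≥ 0 : X_{km} ∈ C} and define G_C(x, g) = E_x exp( Σ_{k=0}^{σ_C} g(X_{km}) ). Assume that d := sup_{x∈C} E_x exp( Σ_{k=0}^{τ_C−1} g(X_{km}) ) < ∞ and that G_C(x, g) < ∞ for every x ∈ 𝒳. Then the function V(x) = log G_C(x, g) satisfies, for every x ∈ 𝒳, ∫ exp(V(y)) P^m(x, dy) ≤ exp( V(x) − g(x) + 2 log d · 1_C(x) ), where P^m is the m-step transition kernel, and moreover V(x) ≤ log d for every x ∈ C. -/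

import Mathlib

open MeasureTheory ProbabilityTheory Real
open scoped ENNReal

/-- Prepend a point to a trajectory. -/
def prependPath {𝒳 : Type*} (x : 𝒳) (ω : ℕ → 𝒳) : ℕ → 𝒳 :=
  fun n => Nat.casesOn n x fun k => ω k

/-- The first return time `τ_C = inf{k ≥ 1 : X_{km} ∈ C}` of the `m`-skeleton to `C`,
with values in `[0,∞]` (`inf ∅ = ∞`). -/
noncomputable def pathTau {𝒳 : Type*} (m : ℕ) (C : Set 𝒳) (ω : ℕ → 𝒳) : ℝ≥0∞ :=
  sInf {c : ℝ≥0∞ | ∃ j : ℕ, c = j ∧ 1 ≤ j ∧ ω (j * m) ∈ C}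

/-- The first hitting time `σ_C = inf{k ≥ 0 : X_{km} ∈ C}` of the `m`-skeleton,
with values in `[0,∞]` (`inf ∅ = ∞`). -/
noncomputable def pathSigma {𝒳 : Type*} (m : ℕ) (C : Set 𝒳) (ω : ℕ → 𝒳) : ℝ≥0∞ :=
  sInf {c : ℝ≥0∞ | ∃ j : ℕ, c = j ∧ ω (j * m) ∈ C}

/-- The exponential function on `[0,∞]`, with `exp ∞ = ∞`. -/
noncomputable def expE (y : ℝ≥0∞) : ℝ≥0∞ :=
  if y = ⊤ then ⊤ else ENNReal.ofReal (Real.exp y.toReal)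


/-!
Under `Pa x` the path starts at `x`. Off `C` one has `σ_C = τ_C`, so splitting off the first
term of the hitting sum and applying the Markov property at time `m` gives exactly
`G x = e^{g x} · P^m G x`. On `C` one has `σ_C = 0`, so `G = e^g ≤ d` there, while
`P^m G x = E_x exp(Σ_{k=1}^{τ_C} g(X_{km}))`: the last term is at most `log d` because
`X_{τ_C m} ∈ C`, and the remaining sum is at most the excursion sum, whose expectation is at
most `d`.
-/

section ExpE

lemma expE_top : expE ⊤ = ⊤ := if_pos rfl

lemma expE_ofReal {r : ℝ} (hr : 0 ≤ r) : expE (ENNReal.ofReal r) = ENNReal.ofReal (exp r) := by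
  rw [expE, if_neg ENNReal.ofReal_ne_top, ENNReal.toReal_ofReal hr]

lemma one_le_expE (y : ℝ≥0∞) : 1 ≤ expE y := by
  unfold expE
  split_ifs
  · exact le_top
  · exact ENNReal.one_le_ofReal.mpr (one_le_exp ENNReal.toReal_nonneg)

lemma expE_ne_zero (y : ℝ≥0∞) : expE y ≠ 0 :=
  (zero_lt_one.trans_le (one_le_expE y)).ne'

lemma expE_add (a b : ℝ≥0∞) : expE (a + b) = expE a * expE b := by
  rcases eq_or_ne a ⊤ with rfl | ha
  · rw [top_add, expE_top, ENNReal.top_mul (expE_ne_zero b)]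
  rcases eq_or_ne b ⊤ with rfl | hb
  · rw [add_top, expE_top, ENNReal.mul_top (expE_ne_zero a)]
  rw [expE, expE, expE, if_neg (ENNReal.add_ne_top.mpr ⟨ha, hb⟩), if_neg ha, if_neg hb,
    ENNReal.toReal_add ha hb, exp_add, ENNReal.ofReal_mul (exp_nonneg _)]

lemma expE_mono : Monotone expE := by
  intro a b hab
  rcases eq_or_ne b ⊤ with rfl | hb
  · rw [expE_top]; exact le_top
  rw [expE, expE, if_neg (ne_top_of_le_ne_top hb hab), if_neg hb]
  exact ENNReal.ofReal_le_ofReal (exp_le_exp.mpr (ENNReal.toReal_mono hb hab))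

lemma one_le_lintegral_expE {α : Type*} [MeasurableSpace α] (μ : Measure α)
    [IsProbabilityMeasure μ] (F : α → ℝ≥0∞) : 1 ≤ ∫⁻ a, expE (F a) ∂μ := by
  simpa using lintegral_mono (μ := μ) fun a => one_le_expE (F a)

lemma eq_ofReal_exp_sub {a b : ℝ} {P : ℝ≥0∞}
    (h : ENNReal.ofReal (exp a) = ENNReal.ofReal (exp b) * P) :
    P = ENNReal.ofReal (exp (a - b)) := by
  rw [sub_eq_neg_add, exp_add, ENNReal.ofReal_mul (exp_nonneg _), h, ← mul_assoc,
    ← ENNReal.ofReal_mul (exp_nonneg _), ← exp_add, neg_add_cancel, exp_zero, ENNReal.ofReal_one,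
    one_mul]

lemma measurable_expE : Measurable expE :=
  Measurable.ite (measurableSet_singleton ⊤) measurable_const
    (ENNReal.measurable_ofReal.comp (measurable_exp.comp ENNReal.measurable_toReal))

end ExpE

section TruncatedSums

noncomputable def sumUpTo (a : ℕ → ℝ≥0∞) (T : ℝ≥0∞) : ℝ≥0∞ :=
  ∑' k : ℕ, if (k : ℝ≥0∞) ≤ T then a k else 0

noncomputable def sumBelow (a : ℕ → ℝ≥0∞) (T : ℝ≥0∞) : ℝ≥0∞ :=
  ∑' k : ℕ, if (k : ℝ≥0∞) < T then a k else 0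

variable (a : ℕ → ℝ≥0∞)

lemma sumUpTo_zero : sumUpTo a 0 = a 0 := by
  rw [sumUpTo, tsum_eq_single 0 fun k hk => if_neg (by simpa using hk)]
  simp

lemma sumUpTo_add_one (T : ℝ≥0∞) :
    sumUpTo a (T + 1) = a 0 + sumUpTo (fun k => a (k + 1)) T := by
  rw [sumUpTo, tsum_eq_zero_add' ENNReal.summable, sumUpTo]
  simp [ENNReal.add_le_add_iff_right ENNReal.one_ne_top]

lemma sumBelow_add_one (T : ℝ≥0∞) :
    sumBelow a (T + 1) = a 0 + sumBelow (fun k => a (k + 1)) T := by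
  rw [sumBelow, tsum_eq_zero_add' ENNReal.summable, sumBelow]
  simp [ENNReal.add_lt_add_iff_right ENNReal.one_ne_top]

lemma sumUpTo_le_sumBelow_add {T L : ℝ≥0∞} (h : ∀ n : ℕ, T = n → a n ≤ L) :
    sumUpTo a T ≤ sumBelow a T + L := by
  have hT : ∑' k : ℕ, (if (k : ℝ≥0∞) = T then a k else 0) ≤ L := by
    by_cases hnat : ∃ n : ℕ, T = n
    · obtain ⟨n, rfl⟩ := hnat
      rw [tsum_eq_single n fun k hk => if_neg (by exact_mod_cast hk), if_pos rfl]
      exact h n rfl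
    · push Not at hnat
      simp [fun k => (hnat k).symm]
  calc sumUpTo a T
      ≤ ∑' k : ℕ, ((if (k : ℝ≥0∞) < T then a k else 0) + if (k : ℝ≥0∞) = T then a k else 0) :=
        ENNReal.tsum_le_tsum fun k => by
          rcases lt_trichotomy (k : ℝ≥0∞) T with hk | rfl | hk
          · simp [hk, hk.le, hk.ne]
          · simp
          · simp [hk.ne', not_le.mpr hk, not_lt.mpr hk.le]
    _ ≤ sumBelow a T + L := by rw [ENNReal.tsum_add]; exact add_le_add le_rfl hT

end TruncatedSums

section HittingTimes

variable {𝒳 : Type*} {m : ℕ} {C : Set 𝒳} {ω : ℕ → 𝒳}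

lemma pathSigma_le {j : ℕ} (h : ω (j * m) ∈ C) : pathSigma m C ω ≤ j :=
  sInf_le ⟨j, rfl, h⟩

lemma mem_of_pathSigma_eq {n : ℕ} (h : pathSigma m C ω = n) : ω (n * m) ∈ C := by
  have hlt : pathSigma m C ω < (n + 1 : ℕ) := by rw [h]; exact_mod_cast n.lt_succ_self
  obtain ⟨_, ⟨j, rfl, hj⟩, hjn⟩ := sInf_lt_iff.mp hlt
  have hnj : n ≤ j := by exact_mod_cast h ▸ pathSigma_le hj
  have hjn : j ≤ n := Nat.lt_succ_iff.mp (by exact_mod_cast hjn)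
  rwa [le_antisymm hjn hnj] at hj

lemma pathSigma_eq_zero_of_mem (h : ω 0 ∈ C) : pathSigma m C ω = 0 :=
  nonpos_iff_eq_zero.mp (by simpa using pathSigma_le (j := 0) (by simpa using h))

lemma pathSigma_eq_pathTau_of_notMem (h : ω 0 ∉ C) : pathSigma m C ω = pathTau m C ω := by
  refine congrArg sInf (Set.ext fun c => ⟨?_, fun ⟨j, hc, _, hj⟩ => ⟨j, hc, hj⟩⟩)
  rintro ⟨j, rfl, hj⟩
  refine ⟨j, rfl, Nat.one_le_iff_ne_zero.mpr ?_, hj⟩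
  rintro rfl
  exact h (by simpa using hj)

lemma pathTau_eq_pathSigma_shift (m : ℕ) (C : Set 𝒳) (ω : ℕ → 𝒳) :
    pathTau m C ω = pathSigma m C (fun k => ω (k + m)) + 1 := by
  rw [pathSigma, ENNReal.sInf_add]
  refine le_antisymm (le_iInf₂ ?_) (le_sInf ?_)
  · rintro _ ⟨j, rfl, hj⟩
    calc pathTau m C ω ≤ ((j + 1 : ℕ) : ℝ≥0∞) :=
          sInf_le ⟨j + 1, rfl, by omega, by rwa [add_one_mul]⟩
      _ = j + 1 := by push_cast; rfl
  · rintro _ ⟨j, rfl, hj1, hj⟩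
    obtain ⟨i, rfl⟩ := Nat.exists_eq_add_of_le' hj1
    calc ⨅ b ∈ {c : ℝ≥0∞ | ∃ j : ℕ, c = j ∧ ω (j * m + m) ∈ C}, b + 1 ≤ i + 1 :=
          iInf₂_le (i : ℝ≥0∞) ⟨i, rfl, by rwa [← add_one_mul]⟩
      _ = ((i + 1 : ℕ) : ℝ≥0∞) := by push_cast; rfl

variable [MeasurableSpace 𝒳]

lemma measurable_shift (n : ℕ) : Measurable fun (ω : ℕ → 𝒳) (k : ℕ) => ω (k + n) :=
  measurable_pi_lambda _ fun _ => measurable_pi_apply _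

lemma measurable_pathSigma (m : ℕ) (hC : MeasurableSet C) : Measurable (pathSigma m C) := by
  classical
  have : pathSigma m C = fun ω => ⨅ j : ℕ, if ω (j * m) ∈ C then (j : ℝ≥0∞) else ⊤ := by
    funext ω
    refine le_antisymm (le_iInf fun j => ?_) (le_sInf ?_)
    · split_ifs with hj
      · exact pathSigma_le hj
      · exact le_top
    · rintro _ ⟨j, rfl, hj⟩
      exact (iInf_le _ j).trans_eq (if_pos hj)
  rw [this]
  exact .iInf fun j => .ite ((measurable_pi_apply (j * m)) hC) measurable_const measurable_const

lemma measurable_pathTau (m : ℕ) (hC : MeasurableSet C) : Measurable (pathTau m C) := by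
  simp_rw [funext (pathTau_eq_pathSigma_shift m C)]
  exact ((measurable_pathSigma m hC).comp (measurable_shift m)).add_const 1

end HittingTimes

section SkeletonSums

variable {𝒳 : Type*} (m : ℕ) (C : Set 𝒳) (g : 𝒳 → ℝ)

noncomputable def hittingSum (ω : ℕ → 𝒳) : ℝ≥0∞ :=
  sumUpTo (fun k => ENNReal.ofReal (g (ω (k * m)))) (pathSigma m C ω)

noncomputable def excursionSum (ω : ℕ → 𝒳) : ℝ≥0∞ :=
  sumBelow (fun k => ENNReal.ofReal (g (ω (k * m)))) (pathTau m C ω)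

variable {m C g}

lemma hittingSum_of_mem {ω : ℕ → 𝒳} (h : ω 0 ∈ C) :
    hittingSum m C g ω = ENNReal.ofReal (g (ω 0)) := by
  rw [hittingSum, pathSigma_eq_zero_of_mem h, sumUpTo_zero, zero_mul]

lemma hittingSum_of_notMem {ω : ℕ → 𝒳} (h : ω 0 ∉ C) :
    hittingSum m C g ω = ENNReal.ofReal (g (ω 0)) + hittingSum m C g (fun k => ω (k + m)) := by
  rw [hittingSum, pathSigma_eq_pathTau_of_notMem h, pathTau_eq_pathSigma_shift, sumUpTo_add_one]
  simp only [zero_mul, add_one_mul]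
  rfl

lemma excursionSum_eq (ω : ℕ → 𝒳) :
    excursionSum m C g ω = ENNReal.ofReal (g (ω 0)) +
      sumBelow (fun k => ENNReal.ofReal (g (ω (k * m + m))))
        (pathSigma m C fun k => ω (k + m)) := by
  rw [excursionSum, pathTau_eq_pathSigma_shift, sumBelow_add_one]
  simp only [zero_mul, add_one_mul]

lemma ofReal_le_excursionSum (ω : ℕ → 𝒳) : ENNReal.ofReal (g (ω 0)) ≤ excursionSum m C g ω :=
  (excursionSum_eq ω).symm ▸ le_self_add

lemma hittingSum_shift_le {L : ℝ≥0∞} (hL : ∀ y ∈ C, ENNReal.ofReal (g y) ≤ L) (ω : ℕ → 𝒳) :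
    hittingSum m C g (fun k => ω (k + m)) ≤ L + excursionSum m C g ω := by
  calc hittingSum m C g (fun k => ω (k + m))
      ≤ sumBelow (fun k => ENNReal.ofReal (g (ω (k * m + m)))) (pathSigma m C fun k => ω (k + m))
        + L := sumUpTo_le_sumBelow_add _ fun _ hn => hL _ (mem_of_pathSigma_eq hn)
    _ ≤ excursionSum m C g ω + L := by rw [excursionSum_eq]; exact add_le_add le_add_self le_rfl
    _ = L + excursionSum m C g ω := add_comm _ _

variable [MeasurableSpace 𝒳]

lemma measurable_hittingSum (hC : MeasurableSet C) (hg : Measurable g) :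
    Measurable (hittingSum m C g) :=
  .tsum fun _ => .ite (measurableSet_le measurable_const (measurable_pathSigma m hC))
    (ENNReal.measurable_ofReal.comp (hg.comp (measurable_pi_apply _))) measurable_const

lemma measurable_excursionSum (hC : MeasurableSet C) (hg : Measurable g) :
    Measurable (excursionSum m C g) :=
  .tsum fun _ => .ite (measurableSet_lt measurable_const (measurable_pathTau m hC))
    (ENNReal.measurable_ofReal.comp (hg.comp (measurable_pi_apply _))) measurable_const

end SkeletonSums

section PathMeasure

variable {𝒳 : Type*} [MeasurableSpace 𝒳] {κ : Kernel 𝒳 𝒳} {Pa : 𝒳 → Measure (ℕ → 𝒳)}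

lemma measurable_prependPath (x : 𝒳) : Measurable (prependPath x) :=
  measurable_pi_lambda _ fun n => by
    cases n with
    | zero => exact measurable_const
    | succ k => exact measurable_pi_apply k

lemma lintegral_eq_lintegral_prependPath (hPa_meas : Measurable Pa)
    (hPa : ∀ x, Pa x = (κ x).bind fun y => (Pa y).map (prependPath x))
    (x : 𝒳) {F : (ℕ → 𝒳) → ℝ≥0∞} (hF : Measurable F) :
    ∫⁻ ω, F ω ∂Pa x = ∫⁻ y, ∫⁻ ω, F (prependPath x ω) ∂Pa y ∂κ x := by
  have hmap : Measurable fun y => (Pa y).map (prependPath x) :=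
    (Measure.measurable_map _ (measurable_prependPath x)).comp hPa_meas
  rw [hPa x, Measure.lintegral_bind hmap.aemeasurable hF.aemeasurable]
  exact lintegral_congr fun y => lintegral_map hF (measurable_prependPath x)

lemma lintegral_mono_of_apply_zero (hPa_meas : Measurable Pa)
    (hPa : ∀ x, Pa x = (κ x).bind fun y => (Pa y).map (prependPath x))
    {x : 𝒳} {F F' : (ℕ → 𝒳) → ℝ≥0∞} (hF : Measurable F) (hF' : Measurable F')
    (h : ∀ ω, ω 0 = x → F ω ≤ F' ω) :
    ∫⁻ ω, F ω ∂Pa x ≤ ∫⁻ ω, F' ω ∂Pa x := by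
  rw [lintegral_eq_lintegral_prependPath hPa_meas hPa x hF,
    lintegral_eq_lintegral_prependPath hPa_meas hPa x hF']
  exact lintegral_mono fun y => lintegral_mono fun ω => h _ rfl

lemma lintegral_congr_of_apply_zero (hPa_meas : Measurable Pa)
    (hPa : ∀ x, Pa x = (κ x).bind fun y => (Pa y).map (prependPath x))
    {x : 𝒳} {F F' : (ℕ → 𝒳) → ℝ≥0∞} (hF : Measurable F) (hF' : Measurable F')
    (h : ∀ ω, ω 0 = x → F ω = F' ω) :
    ∫⁻ ω, F ω ∂Pa x = ∫⁻ ω, F' ω ∂Pa x :=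
  le_antisymm (lintegral_mono_of_apply_zero hPa_meas hPa hF hF' fun ω h0 => (h ω h0).le)
    (lintegral_mono_of_apply_zero hPa_meas hPa hF' hF fun ω h0 => (h ω h0).ge)

/-- The Markov property at time `n`. -/
lemma lintegral_lintegral_apply_eq_lintegral_shift [∀ x, IsProbabilityMeasure (Pa x)]
    (hPa_meas : Measurable Pa)
    (hPa : ∀ x, Pa x = (κ x).bind fun y => (Pa y).map (prependPath x))
    {F : (ℕ → 𝒳) → ℝ≥0∞} (hF : Measurable F) (n : ℕ) (x : 𝒳) :
    ∫⁻ ω, ∫⁻ ω', F ω' ∂Pa (ω n) ∂Pa x = ∫⁻ ω, F (fun k => ω (k + n)) ∂Pa x := by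
  have hmeas : ∀ n, Measurable fun ω : ℕ → 𝒳 => ∫⁻ ω', F ω' ∂Pa (ω n) := fun n =>
    (Measure.measurable_lintegral hF).comp (hPa_meas.comp (measurable_pi_apply n))
  induction n generalizing x with
  | zero =>
    rw [lintegral_congr_of_apply_zero hPa_meas hPa (hmeas 0) measurable_const
      (F' := fun _ => ∫⁻ ω', F ω' ∂Pa x) fun ω h0 => by rw [h0], lintegral_const,
      measure_univ, mul_one]
    rfl
  | succ n ih =>
    rw [lintegral_eq_lintegral_prependPath hPa_meas hPa x (hmeas _),
      lintegral_eq_lintegral_prependPath hPa_meas hPa x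
        (F := fun ω => F fun k => ω (k + (n + 1))) (hF.comp (measurable_shift _))]
    exact lintegral_congr fun y => ih y

end PathMeasure

section SkeletonExpectations

variable {𝒳 : Type*} [MeasurableSpace 𝒳] {κ : Kernel 𝒳 𝒳} {Pa : 𝒳 → Measure (ℕ → 𝒳)}
  [∀ x, IsProbabilityMeasure (Pa x)] {m : ℕ} {C : Set 𝒳} {g : 𝒳 → ℝ} {x : 𝒳}

lemma lintegral_expE_hittingSum_of_mem (hPa_meas : Measurable Pa)
    (hPa : ∀ x, Pa x = (κ x).bind fun y => (Pa y).map (prependPath x))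
    (hC : MeasurableSet C) (hg : Measurable g) (hx : x ∈ C) (hgx : 0 ≤ g x) :
    ∫⁻ ω, expE (hittingSum m C g ω) ∂Pa x = ENNReal.ofReal (exp (g x)) := by
  calc ∫⁻ ω, expE (hittingSum m C g ω) ∂Pa x = ∫⁻ _, ENNReal.ofReal (exp (g x)) ∂Pa x :=
        lintegral_congr_of_apply_zero hPa_meas hPa
          (measurable_expE.comp (measurable_hittingSum hC hg)) measurable_const fun ω h0 => by
            rw [hittingSum_of_mem (h0 ▸ hx), h0, expE_ofReal hgx]
    _ = ENNReal.ofReal (exp (g x)) := by simp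

lemma lintegral_expE_hittingSum_of_notMem (hPa_meas : Measurable Pa)
    (hPa : ∀ x, Pa x = (κ x).bind fun y => (Pa y).map (prependPath x))
    (hC : MeasurableSet C) (hg : Measurable g) (hx : x ∉ C) (hgx : 0 ≤ g x) :
    ∫⁻ ω, expE (hittingSum m C g ω) ∂Pa x = ENNReal.ofReal (exp (g x)) *
      ∫⁻ ω, ∫⁻ ω', expE (hittingSum m C g ω') ∂Pa (ω m) ∂Pa x := by
  have hmeas : Measurable fun ω => expE (hittingSum m C g ω) :=
    measurable_expE.comp (measurable_hittingSum hC hg)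
  calc ∫⁻ ω, expE (hittingSum m C g ω) ∂Pa x
      = ∫⁻ ω, ENNReal.ofReal (exp (g x)) * expE (hittingSum m C g fun k => ω (k + m)) ∂Pa x :=
        lintegral_congr_of_apply_zero hPa_meas hPa hmeas
          ((hmeas.comp (measurable_shift m)).const_mul _) fun ω h0 => by
            rw [hittingSum_of_notMem (h0 ▸ hx), h0, expE_add, expE_ofReal hgx]
    _ = ENNReal.ofReal (exp (g x)) * ∫⁻ ω, ∫⁻ ω', expE (hittingSum m C g ω') ∂Pa (ω m) ∂Pa x := by
        rw [lintegral_const_mul' _ _ ENNReal.ofReal_ne_top,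
          lintegral_lintegral_apply_eq_lintegral_shift hPa_meas hPa hmeas]

lemma ofReal_exp_le_lintegral_expE_excursionSum (hPa_meas : Measurable Pa)
    (hPa : ∀ x, Pa x = (κ x).bind fun y => (Pa y).map (prependPath x))
    (hC : MeasurableSet C) (hg : Measurable g) (hgx : 0 ≤ g x) :
    ENNReal.ofReal (exp (g x)) ≤ ∫⁻ ω, expE (excursionSum m C g ω) ∂Pa x := by
  calc ENNReal.ofReal (exp (g x)) = ∫⁻ _, ENNReal.ofReal (exp (g x)) ∂Pa x := by simp
    _ ≤ ∫⁻ ω, expE (excursionSum m C g ω) ∂Pa x :=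
        lintegral_mono_of_apply_zero hPa_meas hPa measurable_const
          (measurable_expE.comp (measurable_excursionSum hC hg)) fun ω h0 => by
            rw [← expE_ofReal hgx, ← h0]
            exact expE_mono (ofReal_le_excursionSum ω)

lemma lintegral_lintegral_expE_hittingSum_le (hPa_meas : Measurable Pa)
    (hPa : ∀ x, Pa x = (κ x).bind fun y => (Pa y).map (prependPath x))
    (hC : MeasurableSet C) (hg : Measurable g) {L : ℝ≥0∞}
    (hL : ∀ y ∈ C, ENNReal.ofReal (g y) ≤ L) :
    ∫⁻ ω, ∫⁻ ω', expE (hittingSum m C g ω') ∂Pa (ω m) ∂Pa x ≤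
      expE L * ∫⁻ ω, expE (excursionSum m C g ω) ∂Pa x := by
  have hmeas : Measurable fun ω => expE (hittingSum m C g ω) :=
    measurable_expE.comp (measurable_hittingSum hC hg)
  rw [lintegral_lintegral_apply_eq_lintegral_shift hPa_meas hPa hmeas]
  calc ∫⁻ ω, expE (hittingSum m C g fun k => ω (k + m)) ∂Pa x
      ≤ ∫⁻ ω, expE L * expE (excursionSum m C g ω) ∂Pa x :=
        lintegral_mono fun ω => (expE_mono (hittingSum_shift_le hL ω)).trans_eq (expE_add _ _)
    _ = expE L * ∫⁻ ω, expE (excursionSum m C g ω) ∂Pa x :=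
        lintegral_const_mul _ (measurable_expE.comp (measurable_excursionSum hC hg))

end SkeletonExpectations

/-- `Pa x` is the law of the chain started at `x`, pinned down by the recursion `hPa`. -/
theorem stmt_16_general {𝒳 : Type*} [MeasurableSpace 𝒳]
    (κ : Kernel 𝒳 𝒳)
    (Pa : 𝒳 → Measure (ℕ → 𝒳)) [∀ x, IsProbabilityMeasure (Pa x)]
    (hPa_meas : Measurable Pa)
    (hPa : ∀ x, Pa x = (κ x).bind fun y => (Pa y).map (prependPath x))
    (m : ℕ)
    (g : 𝒳 → ℝ) (hgm : Measurable g) (hg0 : ∀ x, 0 ≤ g x)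
    (C : Set 𝒳) (hC : MeasurableSet C)
    (G : 𝒳 → ℝ≥0∞)
    (hG : ∀ x, G x = ∫⁻ ω, expE (∑' k : ℕ,
        if (k : ℝ≥0∞) ≤ pathSigma m C ω then ENNReal.ofReal (g (ω (k * m))) else 0) ∂(Pa x))
    (hGfin : ∀ x, G x ≠ ⊤)
    (d : ℝ≥0∞)
    (hd : d = ⨆ x ∈ C, ∫⁻ ω, expE (∑' k : ℕ,
        if (k : ℝ≥0∞) < pathTau m C ω then ENNReal.ofReal (g (ω (k * m))) else 0) ∂(Pa x))
    (hdfin : d ≠ ⊤)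
    (V : 𝒳 → ℝ) (hV : ∀ x, V x = Real.log (G x).toReal) :
    (∀ x, ∫⁻ ω, ENNReal.ofReal (Real.exp (V (ω m))) ∂(Pa x)
        ≤ ENNReal.ofReal (Real.exp (V x - g x +
            2 * Real.log d.toReal * Set.indicator C (fun _ => 1) x))) ∧
    (∀ x ∈ C, V x ≤ Real.log d.toReal) := by
  replace hG : ∀ x, G x = ∫⁻ ω, expE (hittingSum m C g ω) ∂Pa x := hG
  have hexpV (x : 𝒳) : ENNReal.ofReal (exp (V x)) = G x := by
    have hG0 : G x ≠ 0 := (zero_lt_one.trans_le (hG x ▸ one_le_lintegral_expE _ _)).ne'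
    rw [hV, exp_log (ENNReal.toReal_pos hG0 (hGfin x)), ENNReal.ofReal_toReal (hGfin x)]
  have hPV (x : 𝒳) : ∫⁻ ω, ENNReal.ofReal (exp (V (ω m))) ∂Pa x =
      ∫⁻ ω, ∫⁻ ω', expE (hittingSum m C g ω') ∂Pa (ω m) ∂Pa x := by
    simp only [hexpV, hG]
  have hexc_le {x : 𝒳} (hx : x ∈ C) : ∫⁻ ω, expE (excursionSum m C g ω) ∂Pa x ≤ d :=
    hd ▸ le_biSup (fun x => ∫⁻ ω, expE (excursionSum m C g ω) ∂Pa x) hx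
  have hgd {x : 𝒳} (hx : x ∈ C) : exp (g x) ≤ d.toReal :=
    (ENNReal.ofReal_le_iff_le_toReal hdfin).mp
      ((ofReal_exp_le_lintegral_expE_excursionSum hPa_meas hPa hC hgm (hg0 x)).trans (hexc_le hx))
  have hlog {x : 𝒳} (hx : x ∈ C) : g x ≤ log d.toReal :=
    (le_log_iff_exp_le ((exp_pos _).trans_le (hgd hx))).mpr (hgd hx)
  have hVC {x : 𝒳} (hx : x ∈ C) : V x = g x := by
    rw [hV, hG, lintegral_expE_hittingSum_of_mem hPa_meas hPa hC hgm hx (hg0 x),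
      ENNReal.toReal_ofReal (exp_nonneg _), log_exp]
  refine ⟨fun x => ?_, fun x hx => hVC hx ▸ hlog hx⟩
  by_cases hx : x ∈ C
  · have hd0 : 0 < d.toReal := (exp_pos _).trans_le (hgd hx)
    rw [hPV, Set.indicator_of_mem hx, hVC hx, sub_self, zero_add, mul_one, two_mul, exp_add,
      exp_log hd0, ENNReal.ofReal_mul hd0.le, ENNReal.ofReal_toReal hdfin]
    calc _ ≤ expE (ENNReal.ofReal (log d.toReal)) * ∫⁻ ω, expE (excursionSum m C g ω) ∂Pa x :=
          lintegral_lintegral_expE_hittingSum_le hPa_meas hPa hC hgm fun y hy =>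
            ENNReal.ofReal_le_ofReal (hlog hy)
      _ ≤ d * d := by
          rw [expE_ofReal ((hg0 x).trans (hlog hx)), exp_log hd0, ENNReal.ofReal_toReal hdfin]
          exact mul_le_mul_right (hexc_le hx) d
  · rw [hPV, Set.indicator_of_notMem hx, mul_zero, add_zero]
    refine (eq_ofReal_exp_sub ?_).le
    rw [hexpV, hG, lintegral_expE_hittingSum_of_notMem hPa_meas hPa hC hgm hx (hg0 x)]

/-- Theorem (converse direction: integrability of the excursion gives the multiplicative
drift condition): if `d = sup_{x∈C} E_x exp(Σ_{k=0}^{τ_C−1} g(X_{km})) < ∞` and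
`G_C(x,g) = E_x exp(Σ_{k=0}^{σ_C} g(X_{km})) < ∞` for all `x`, then
`V(x) = log G_C(x,g)` satisfies `P^m(e^V)(x) ≤ exp(V(x) − g(x) + 2 log d · 1_C(x))`
and `V ≤ log d` on `C`.  Here `Pa x` is the Ionescu–Tulcea path measure of the canonical
chain started at `x`, characterized by the recursion `hPa`. -/
theorem stmt_16 {𝒳 : Type*} [MeasurableSpace 𝒳]
    (κ : Kernel 𝒳 𝒳) [IsMarkovKernel κ]
    (Pa : 𝒳 → Measure (ℕ → 𝒳)) [∀ x, IsProbabilityMeasure (Pa x)]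
    (hPa_meas : Measurable Pa)
    (hPa : ∀ x, Pa x = (κ x).bind fun y => (Pa y).map (prependPath x))
    (m : ℕ) (hm : 1 ≤ m)
    (g : 𝒳 → ℝ) (hgm : Measurable g) (hg0 : ∀ x, 0 ≤ g x)
    (C : Set 𝒳) (hC : MeasurableSet C)
    (G : 𝒳 → ℝ≥0∞)
    (hG : ∀ x, G x = ∫⁻ ω, expE (∑' k : ℕ,
        if (k : ℝ≥0∞) ≤ pathSigma m C ω then ENNReal.ofReal (g (ω (k * m))) else 0) ∂(Pa x))
    (hGfin : ∀ x, G x ≠ ⊤)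
    (d : ℝ≥0∞)
    (hd : d = ⨆ x ∈ C, ∫⁻ ω, expE (∑' k : ℕ,
        if (k : ℝ≥0∞) < pathTau m C ω then ENNReal.ofReal (g (ω (k * m))) else 0) ∂(Pa x))
    (hdfin : d ≠ ⊤)
    (V : 𝒳 → ℝ) (hV : ∀ x, V x = Real.log (G x).toReal) :
    (∀ x, ∫⁻ ω, ENNReal.ofReal (Real.exp (V (ω m))) ∂(Pa x)
        ≤ ENNReal.ofReal (Real.exp (V x - g x +
            2 * Real.log d.toReal * Set.indicator C (fun _ => 1) x))) ∧
    (∀ x ∈ C, V x ≤ Real.log d.toReal) :=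
  stmt_16_general κ Pa hPa_meas hPa m g hgm hg0 C hC G hG hGfin d hd hdfin V hV
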